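/- arXiv:1311.5390 — 2 statements merged into one kernel-verified Lean document; each statement's English description precedes it below -/
import Mathlib

section
/- Let n ≥ 1, x ∈ ℂⁿ, and y = Fx where F = F_n/√n is the normalized Fourier matrix. For p ≥ 1 and a partition π of {1,…,p}, define f_π(x) = Σ x_{i_1}⋯x_{i_p}, the sum over all multi-indices i ∈ (ℤ/nℤ)^p with i_a = i_b whenever a and b lie in the same block of π, and g_π(x) = Σ x_{i_1}⋯x_{i_p}, the sum over all multi-indices i ∈ (ℤ/nℤ)^p with Σ_{r∈β} i_r = 0 in ℤ/nℤ for every block β of π. Then f_π(y) = n^{|π| − p/2} g_π(x) and g_π(y) = n^{p/2 − |π|} f_π(x), where |π| is the number of blocks of π. Consequently, for a circulant complex Hadamard matrix H with first row x, all the numbers f_π(x), g_π(x) (π ranging over partitions of {1,…,p}) are real if and only if all the numbers f_π(y), g_π(y) are real; that is, the set X_p of such matrices is stable under the duality H ↦ Φ(H), where Φ(H) is the circulant matrix with first row Fx. -/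
/-!
Multiplying out `f_π(Fx)` gives a sum over pairs of multi-indices `(i, j)` weighted by
`∏ₐ w^{iₐ jₐ}`. For `i` constant on the blocks of `π` the weight is a product of one character
per block, evaluated at the block sum of `j`, so by orthogonality of characters the sum over `i`
is `n^{|π|}` when all block sums of `j` vanish and `0` otherwise: `f_π(Fx) = n^{|π|-p/2} g_π(x)`.
Applying this to `Fx` and using `F²x = x(-·)`, which leaves `f_π` unchanged, gives the second
identity. The factors `n^{±(|π|-p/2)}` are positive reals, so reality passes between `x` and `Fx`.
-/

open Complex Matrix

open scoped Classical in
/-- `f_π(x) = Σ_{i ∈ π} x_{i_1} ⋯ x_{i_p}`: the sum over multi-indices that are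
constant on each block of the partition `π`. -/
noncomputable def fPar {n p : ℕ} [NeZero n]
    (π : Finpartition (Finset.univ : Finset (Fin p))) (x : ZMod n → ℂ) : ℂ :=
  ∑ i ∈ Finset.univ.filter
      (fun i : Fin p → ZMod n => ∀ B ∈ π.parts, ∀ a ∈ B, ∀ b ∈ B, i a = i b),
    ∏ a : Fin p, x (i a)

open scoped Classical in
/-- `g_π(x) = Σ_{i ⊢ π} x_{i_1} ⋯ x_{i_p}`: the sum over multi-indices whose sum over
each block of the partition `π` vanishes. -/
noncomputable def gPar {n p : ℕ} [NeZero n]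
    (π : Finpartition (Finset.univ : Finset (Fin p))) (x : ZMod n → ℂ) : ℂ :=
  ∑ i ∈ Finset.univ.filter
      (fun i : Fin p → ZMod n => ∀ B ∈ π.parts, ∑ r ∈ B, i r = 0),
    ∏ a : Fin p, x (i a)

/-- The `n×n` Fourier matrix `(w^{ij})` with `w = e^{2πi/n}`. -/
noncomputable def Fourier (n : ℕ) : Matrix (ZMod n) (ZMod n) ℂ :=
  fun i j => Complex.exp (2 * Real.pi * Complex.I * (i.val * j.val) / n)

/-- The normalized Fourier matrix `F = F_n / √n`. -/
noncomputable def NFourier (n : ℕ) : Matrix (ZMod n) (ZMod n) ℂ :=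
  (1 / (Real.sqrt n : ℂ)) • Fourier n

/-- A complex Hadamard matrix: unimodular entries and pairwise orthogonal rows. -/
def IsHadamard {n : ℕ} [NeZero n] (H : Matrix (ZMod n) (ZMod n) ℂ) : Prop :=
  (∀ i j, ‖H i j‖ = 1) ∧ H * Hᴴ = (n : ℂ) • 1

lemma AddChar.map_sum_eq_prod {A M ι : Type*} [AddCommMonoid A] [CommMonoid M]
    (ψ : AddChar A M) (s : Finset ι) (f : ι → A) :
    ψ (∑ a ∈ s, f a) = ∏ a ∈ s, ψ (f a) := by
  classical
  induction s using Finset.induction_on with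
  | empty => simp
  | insert a s ha ih => rw [Finset.sum_insert ha, Finset.prod_insert ha, ψ.map_add_eq_mul, ih]

namespace Finpartition

variable {ι : Type*} [Fintype ι] [DecidableEq ι] (π : Finpartition (Finset.univ : Finset ι))

def block (a : ι) : π.parts := ⟨π.part a, π.part_mem.2 (Finset.mem_univ a)⟩

lemma block_eq_of_mem {B : π.parts} {a : ι} (ha : a ∈ B.1) : π.block a = B :=
  Subtype.ext (π.part_eq_of_mem B.2 ha)

lemma sum_eq_sum_parts_sum {M : Type*} [AddCommMonoid M] (f : ι → M) :
    ∑ a, f a = ∑ B : π.parts, ∑ a ∈ B.1, f a := by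
  rw [Finset.sum_coe_sort π.parts (fun B => ∑ a ∈ B, f a)]
  conv_lhs => rw [← π.biUnion_parts]
  exact Finset.sum_biUnion π.supIndep.pairwiseDisjoint

lemma sum_filter_constOnParts {α M : Type*} [Fintype α] [AddCommMonoid M]
    [DecidablePred fun i : ι → α => ∀ B ∈ π.parts, ∀ a ∈ B, ∀ b ∈ B, i a = i b] (F : (ι → α) → M) :
    ∑ i ∈ Finset.univ.filter (fun i : ι → α => ∀ B ∈ π.parts, ∀ a ∈ B, ∀ b ∈ B, i a = i b), F i
      = ∑ j : π.parts → α, F (j ∘ π.block) := by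
  let rep (B : π.parts) : ι := (π.nonempty_of_mem_parts B.2).choose
  have rep_mem (B : π.parts) : rep B ∈ B.1 := (π.nonempty_of_mem_parts B.2).choose_spec
  have const_eq {i : ι → α} (hi : ∀ B ∈ π.parts, ∀ a ∈ B, ∀ b ∈ B, i a = i b) (a : ι) :
      i (rep (π.block a)) = i a :=
    hi _ (π.block a).2 _ (rep_mem _) _ (π.mem_part_self.2 (Finset.mem_univ a))
  refine Finset.sum_nbij' (fun i => i ∘ rep) (· ∘ π.block) (by simp) ?_ ?_ ?_ ?_
  · intro j _
    simp only [Finset.mem_filter, Finset.mem_univ, true_and, Function.comp_apply]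
    intro B hB a ha b hb
    rw [π.block_eq_of_mem (B := ⟨B, hB⟩) ha, π.block_eq_of_mem (B := ⟨B, hB⟩) hb]
  · intro i hi
    funext a
    exact const_eq (Finset.mem_filter.1 hi).2 a
  · intro j _
    funext B
    simp [π.block_eq_of_mem (rep_mem B)]
  · intro i hi
    congr 1
    funext a
    exact (const_eq (Finset.mem_filter.1 hi).2 a).symm

end Finpartition

open ZMod

lemma ZMod.sum_stdAddChar_mul (n : ℕ) [NeZero n] (s : ZMod n) :
    ∑ j : ZMod n, stdAddChar (j * s) = if s = 0 then (n : ℂ) else 0 := by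
  rw [AddChar.sum_mulShift s (isPrimitive_stdAddChar n)]
  simp [ZMod.card]

lemma Finpartition.sum_constOnParts_prod_stdAddChar {ι : Type*} [Fintype ι] [DecidableEq ι]
    {n : ℕ} [NeZero n] (π : Finpartition (Finset.univ : Finset ι))
    [DecidablePred fun i : ι → ZMod n => ∀ B ∈ π.parts, ∀ a ∈ B, ∀ b ∈ B, i a = i b]
    (g : ι → ZMod n) :
    ∑ i ∈ Finset.univ.filter (fun i : ι → ZMod n => ∀ B ∈ π.parts, ∀ a ∈ B, ∀ b ∈ B, i a = i b),
        ∏ a, stdAddChar (i a * g a)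
      = if ∀ B ∈ π.parts, ∑ r ∈ B, g r = 0 then (n : ℂ) ^ π.parts.card else 0 := by
  have prod_blocks (j : π.parts → ZMod n) :
      ∏ a, stdAddChar (j (π.block a) * g a) = ∏ B : π.parts, stdAddChar (j B * ∑ r ∈ B.1, g r) := by
    rw [← AddChar.map_sum_eq_prod, ← AddChar.map_sum_eq_prod, π.sum_eq_sum_parts_sum]
    refine congrArg _ (Finset.sum_congr rfl fun B _ => ?_)
    rw [Finset.mul_sum]
    exact Finset.sum_congr rfl fun a ha => by rw [π.block_eq_of_mem ha]
  simp only [π.sum_filter_constOnParts, Function.comp_apply, prod_blocks]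
  rw [← Fintype.prod_sum fun (B : π.parts) (c : ZMod n) => stdAddChar (c * ∑ r ∈ B.1, g r)]
  simp only [ZMod.sum_stdAddChar_mul, Finset.prod_ite_zero, Finset.prod_const, Finset.card_univ,
    Fintype.card_coe, Finset.mem_univ, true_implies, Subtype.forall]

lemma Fourier_apply (n : ℕ) [NeZero n] (i j : ZMod n) : Fourier n i j = stdAddChar (i * j) := by
  have : i * j = ((i.val * j.val : ℕ) : ZMod n) := by
    push_cast [ZMod.natCast_zmod_val]
    ring
  rw [this, ← Int.cast_natCast, ZMod.stdAddChar_coe]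
  simp [Fourier]

lemma NFourier_mulVec_apply (n : ℕ) [NeZero n] (x : ZMod n → ℂ) (k : ZMod n) :
    (NFourier n *ᵥ x) k = 1 / (Real.sqrt n : ℂ) * ∑ m, stdAddChar (k * m) * x m := by
  simp only [NFourier, mulVec, dotProduct, Matrix.smul_apply, smul_eq_mul, Fourier_apply,
    Finset.mul_sum, mul_assoc]

lemma NFourier_mulVec_eq_dft (n : ℕ) [NeZero n] (x : ZMod n → ℂ) :
    NFourier n *ᵥ x = fun k => 1 / (Real.sqrt n : ℂ) * 𝓕 x (-k) := by
  funext k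
  simp [NFourier_mulVec_apply, dft_apply, mul_comm]

lemma NFourier_mulVec_mulVec (n : ℕ) [NeZero n] (x : ZMod n → ℂ) :
    NFourier n *ᵥ (NFourier n *ᵥ x) = fun k => x (-k) := by
  have hsqrt : (Real.sqrt n : ℂ) ^ 2 = n := by
    rw [← Complex.ofReal_pow, Real.sq_sqrt (Nat.cast_nonneg n), Complex.ofReal_natCast]
  have hn : (Real.sqrt n : ℂ) ≠ 0 := by
    intro h
    rw [h, zero_pow two_ne_zero] at hsqrt
    exact NeZero.ne n (by exact_mod_cast hsqrt.symm)
  funext k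
  rw [NFourier_mulVec_eq_dft, NFourier_mulVec_eq_dft, dft_const_mul, dft_comp_neg, dft_dft]
  simp only [neg_neg, smul_eq_mul, ← hsqrt]
  field_simp

lemma one_div_sqrt_pow_mul_pow (n : ℕ) [NeZero n] (p k : ℕ) :
    (1 / (Real.sqrt n : ℂ)) ^ p * (n : ℂ) ^ k = (((n : ℝ) ^ ((k : ℝ) - p / 2) : ℝ) : ℂ) := by
  have hn : (0 : ℝ) < n := Nat.cast_pos.2 (Nat.pos_of_neZero n)
  have : (n : ℝ) ^ ((k : ℝ) - p / 2) = (n : ℝ) ^ k / Real.sqrt n ^ p := by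
    rw [Real.rpow_sub hn, Real.rpow_natCast, Real.sqrt_eq_rpow, ← Real.rpow_natCast _ p,
      ← Real.rpow_mul hn.le, one_div_mul_eq_div]
  rw [this]
  push_cast
  ring

lemma fPar_NFourier_mulVec {n p : ℕ} [NeZero n] (π : Finpartition (Finset.univ : Finset (Fin p)))
    (x : ZMod n → ℂ) :
    fPar π (NFourier n *ᵥ x) = (((n : ℝ) ^ ((π.parts.card : ℝ) - p / 2) : ℝ) : ℂ) * gPar π x := by
  have expand (i : Fin p → ZMod n) : ∏ a, (NFourier n *ᵥ x) (i a)
      = (1 / (Real.sqrt n : ℂ)) ^ p *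
          ∑ g : Fin p → ZMod n, (∏ a, stdAddChar (i a * g a)) * ∏ a, x (g a) := by
    simp only [NFourier_mulVec_apply, Finset.prod_mul_distrib, Finset.prod_const, Finset.card_univ,
      Fintype.card_fin, Fintype.prod_sum]
  unfold fPar gPar
  rw [Finset.sum_congr rfl fun i _ => expand i, ← Finset.mul_sum, Finset.sum_comm,
    ← one_div_sqrt_pow_mul_pow, mul_assoc, Finset.sum_filter]
  congr 1
  rw [Finset.mul_sum]
  refine Finset.sum_congr rfl fun g _ => ?_
  rw [← Finset.sum_mul, π.sum_constOnParts_prod_stdAddChar]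
  split_ifs <;> simp

lemma fPar_comp_neg {n p : ℕ} [NeZero n] (π : Finpartition (Finset.univ : Finset (Fin p)))
    (x : ZMod n → ℂ) :
    fPar π (fun k => x (-k)) = fPar π x := by
  unfold fPar
  exact Finset.sum_nbij' (fun i : Fin p → ZMod n => -i) (fun i => -i)
    (by simp) (by simp) (by simp) (by simp) fun _ _ => rfl

lemma gPar_NFourier_mulVec {n p : ℕ} [NeZero n] (π : Finpartition (Finset.univ : Finset (Fin p)))
    (x : ZMod n → ℂ) :
    gPar π (NFourier n *ᵥ x) = (((n : ℝ) ^ ((p / 2 : ℝ) - π.parts.card) : ℝ) : ℂ) * fPar π x := by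
  have hpos : (0 : ℝ) < (n : ℝ) ^ ((π.parts.card : ℝ) - p / 2) :=
    Real.rpow_pos_of_pos (Nat.cast_pos.2 (Nat.pos_of_neZero n)) _
  have h := fPar_NFourier_mulVec π (NFourier n *ᵥ x)
  rw [NFourier_mulVec_mulVec, fPar_comp_neg] at h
  rw [h, ← neg_sub, Real.rpow_neg (Nat.cast_nonneg n), Complex.ofReal_inv,
    inv_mul_cancel_left₀ (Complex.ofReal_ne_zero.2 hpos.ne')]

lemma Complex.im_ofReal_mul_eq_zero_iff {r : ℝ} (hr : r ≠ 0) (z : ℂ) :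
    (r * z).im = 0 ↔ z.im = 0 := by
  rw [Complex.im_ofReal_mul, mul_eq_zero, or_iff_right hr]

theorem duality_partition_invariants_general
    (n : ℕ) [NeZero n] (p : ℕ)
    (x y : ZMod n → ℂ) (hy : y = (NFourier n).mulVec x) :
    (∀ π : Finpartition (Finset.univ : Finset (Fin p)),
      fPar π y = (((n : ℝ) ^ ((π.parts.card : ℝ) - p / 2) : ℝ) : ℂ) * gPar π x ∧
      gPar π y = (((n : ℝ) ^ ((p / 2 : ℝ) - π.parts.card) : ℝ) : ℂ) * fPar π x) ∧
    (∀ H : Matrix (ZMod n) (ZMod n) ℂ, (∀ i j, H i j = x (j - i)) → _root_.IsHadamard H →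
      ((∀ π : Finpartition (Finset.univ : Finset (Fin p)),
          (fPar π x).im = 0 ∧ (gPar π x).im = 0) ↔
       (∀ π : Finpartition (Finset.univ : Finset (Fin p)),
          (fPar π y).im = 0 ∧ (gPar π y).im = 0))) := by
  subst hy
  have hpow (t : ℝ) : (n : ℝ) ^ t ≠ 0 :=
    (Real.rpow_pos_of_pos (Nat.cast_pos.2 (Nat.pos_of_neZero n)) t).ne'
  refine ⟨fun π => ⟨fPar_NFourier_mulVec π x, gPar_NFourier_mulVec π x⟩,
    fun _ _ _ => forall_congr' fun π => ?_⟩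
  rw [fPar_NFourier_mulVec, gPar_NFourier_mulVec, Complex.im_ofReal_mul_eq_zero_iff (hpow _),
    Complex.im_ofReal_mul_eq_zero_iff (hpow _), and_comm]

/-- For `y = Fx` one has `f_π(y) = n^{|π|-p/2} g_π(x)` and `g_π(y) = n^{p/2-|π|} f_π(x)`;
consequently the set `X_p` of circulant complex Hadamard matrices whose first row `x`
has all `f_π(x), g_π(x)` real is stable under the duality `x ↦ Fx`. -/
theorem duality_partition_invariants
    (n : ℕ) [NeZero n] (p : ℕ) (hp : 1 ≤ p)
    (x y : ZMod n → ℂ) (hy : y = (NFourier n).mulVec x) :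
    (∀ π : Finpartition (Finset.univ : Finset (Fin p)),
      fPar π y = (((n : ℝ) ^ ((π.parts.card : ℝ) - p / 2) : ℝ) : ℂ) * gPar π x ∧
      gPar π y = (((n : ℝ) ^ ((p / 2 : ℝ) - π.parts.card) : ℝ) : ℂ) * fPar π x) ∧
    (∀ H : Matrix (ZMod n) (ZMod n) ℂ, (∀ i j, H i j = x (j - i)) → _root_.IsHadamard H →
      ((∀ π : Finpartition (Finset.univ : Finset (Fin p)),
          (fPar π x).im = 0 ∧ (gPar π x).im = 0) ↔
       (∀ π : Finpartition (Finset.univ : Finset (Fin p)),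
          (fPar π y).im = 0 ∧ (gPar π y).im = 0))) :=
  duality_partition_invariants_general n p x y hy
end

section
/- Let p, q be distinct primes, ω = e^{2πi/(pq)}, and let M ∈ M_{p+q}(ℤ/pqℤ) (rows and columns indexed by ℤ/(p+q)ℤ) be such that U = (ω^{M_{ij}}) is a complex Hadamard matrix. For distinct i, j set L_{ij}(k) = M_{jk} − M_{ik}. Then for all distinct i, j there exist an element r ∈ ℤ/pqℤ and a partition ℤ/(p+q)ℤ = P ⊔ Q ⊔ R such that: #R = 2 and L_{ij}(k) = r for all k ∈ R; #P = p−1 and L_{ij} restricted to P is a bijection onto (r + q·(ℤ/pqℤ)) \ {r}; #Q = q−1 and L_{ij} restricted to Q is a bijection onto (r + p·(ℤ/pqℤ)) \ {r}. -/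
open Complex Matrix

/-- An admissible decomposition for the row-difference function `L = L_{ij}`:
a partition `ℤ/(p+q)ℤ = P ⊔ Q ⊔ R` and `r ∈ ℤ/pqℤ` such that `L ≡ r` on the
two-element set `R`, `L` restricted to `P` (of cardinality `p-1`) is a bijection onto
`(r + q·(ℤ/pqℤ)) \ {r}`, and `L` restricted to `Q` (of cardinality `q-1`) is a
bijection onto `(r + p·(ℤ/pqℤ)) \ {r}`. -/
def AdmissibleDecomp (p q : ℕ) [NeZero (p + q)]
    (L : ZMod (p + q) → ZMod (p * q))
    (P Q R : Finset (ZMod (p + q))) (r : ZMod (p * q)) : Prop :=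
  Disjoint P Q ∧ Disjoint P R ∧ Disjoint Q R ∧ P ∪ Q ∪ R = Finset.univ ∧
  R.card = 2 ∧ (∀ k ∈ R, L k = r) ∧
  P.card = p - 1 ∧
  Set.BijOn L ↑P (Set.range (fun t : ZMod (p * q) => r + (q : ZMod (p * q)) * t) \ {r}) ∧
  Q.card = q - 1 ∧
  Set.BijOn L ↑Q (Set.range (fun t : ZMod (p * q) => r + (p : ZMod (p * q)) * t) \ {r})

/-!
Orthogonality of rows `i` and `j` says that the `p + q` roots of unity `ω ^ L(k)` sum to zero.
Through the Chinese remainder isomorphism `ℤ/pq ≅ ℤ/p × ℤ/q` this is a relation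
`∑ d(s, t) ψ(s, t) = 0`, where `d` counts the fibres of `L` and `ψ` is an injective character.
The values of `ψ` span `ℚ(ω)`, of dimension `φ(pq) = (p - 1)(q - 1)`, so the rational relations
among them form a space of dimension `pq - (p - 1)(q - 1) = p + q - 1`; the obvious relations
`d(s, t) = f(s) + g(t)` (every row and every column of values of `ψ` sums to zero) already have
that dimension, hence are all of them. A natural-number solution of total `p + q` with `p ∤ q`,
`q ∤ p` is then forced to be `d(s, t) = [s = s₀] + [t = t₀]`: `L` takes each value of the two
cosets through `r = (s₀, t₀)` once, and `r` twice.
-/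

open Module Submodule Finset Function ComplexConjugate

theorem exists_add_of_sum_smul_eq_zero {K V α β : Type*} [Field K] [AddCommGroup V] [Module K V]
    [Fintype α] [Fintype β] [Nonempty α] [Nonempty β] (v : α × β → V)
    (hrow : ∀ a, ∑ b, v (a, b) = 0) (hcol : ∀ b, ∑ a, v (a, b) = 0)
    (hrank : (Fintype.card α - 1) * (Fintype.card β - 1) ≤ finrank K (span K (Set.range v)))
    (d : α × β → K) (hd : ∑ x, d x • v x = 0) :
    ∃ (f : α → K) (g : β → K), ∀ a b, d (a, b) = f a + g b := by
  set E := Fintype.linearCombination K v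
  set A : (α → K) × (β → K) →ₗ[K] (α × β → K) :=
    (LinearMap.funLeft K K Prod.fst).coprod (LinearMap.funLeft K K Prod.snd)
  have hA (f : α → K) (g : β → K) : A (f, g) = fun x => f x.1 + g x.2 := rfl
  have hle : LinearMap.range A ≤ LinearMap.ker E := by
    rintro _ ⟨⟨f, g⟩, rfl⟩
    simp only [LinearMap.mem_ker, hA, E, Fintype.linearCombination_apply, add_smul,
      sum_add_distrib, Fintype.sum_prod_type, ← smul_sum, hrow, smul_zero, sum_const_zero,
      zero_add]
    rw [sum_comm]
    simp only [← smul_sum, hcol, smul_zero, sum_const_zero]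
  have hkerA : finrank K (LinearMap.ker A) ≤ 1 := by
    obtain ⟨a₀⟩ := ‹Nonempty α›
    obtain ⟨b₀⟩ := ‹Nonempty β›
    have hker : LinearMap.ker A ≤ K ∙ ((1, -1) : (α → K) × (β → K)) := by
      rintro ⟨f, g⟩ hfg
      have h (a b) : f a + g b = 0 := congrFun hfg (a, b)
      refine mem_span_singleton.mpr ⟨f a₀, Prod.ext (funext fun a => ?_) (funext fun b => ?_)⟩
      · show f a₀ • (1 : K) = f a
        linear_combination h a₀ b₀ - h a b₀
      · show f a₀ • (-1 : K) = g b
        linear_combination -(h a₀ b)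
    exact (Submodule.finrank_mono hker).trans ((finrank_span_le_card _).trans (by simp))
  have hdim : finrank K (LinearMap.ker E) ≤ finrank K (LinearMap.range A) := by
    have hA_dim := LinearMap.finrank_range_add_finrank_ker A
    have hE_dim := LinearMap.finrank_range_add_finrank_ker E
    rw [Fintype.range_linearCombination] at hE_dim
    simp only [finrank_prod, finrank_fintype_fun_eq_card, Fintype.card_prod] at hA_dim hE_dim
    obtain ⟨m, hm⟩ : ∃ m, Fintype.card α = m + 1 :=
      ⟨_, (Nat.succ_pred_eq_of_pos Fintype.card_pos).symm⟩
    obtain ⟨n, hn⟩ : ∃ n, Fintype.card β = n + 1 :=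
      ⟨_, (Nat.succ_pred_eq_of_pos Fintype.card_pos).symm⟩
    rw [hm, hn] at hA_dim hE_dim hrank
    simp only [add_tsub_cancel_right] at hrank
    nlinarith
  obtain ⟨⟨f, g⟩, hfg⟩ : d ∈ LinearMap.range A :=
    Submodule.eq_of_le_of_finrank_le hle hdim ▸ LinearMap.mem_ker.mpr hd
  exact ⟨f, g, fun a b => (congrFun hfg (a, b)).symm⟩

theorem exists_add_of_add_eq_add {α β : Type*} [Nonempty α] [Nonempty β] (d : α × β → ℕ)
    (h : ∀ a a' b b', d (a, b) + d (a', b') = d (a, b') + d (a', b)) :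
    ∃ (f : α → ℕ) (g : β → ℕ), ∀ a b, d (a, b) = f a + g b := by
  obtain ⟨b₀⟩ := ‹Nonempty β›
  -- `a₀` minimises `d (·, b₀)`, so the truncated subtraction in `f` is exact.
  set a₀ := argmin fun a => d (a, b₀)
  refine ⟨fun a => d (a, b₀) - d (a₀, b₀), fun b => d (a₀, b), fun a b => ?_⟩
  have hrect := h a a₀ b b₀
  have hmin : d (a₀, b₀) ≤ d (a, b₀) := argmin_le (fun a => d (a, b₀)) a
  dsimp only
  omega

theorem exists_eq_ite_of_sum_eq_one {α : Type*} [Fintype α] [DecidableEq α] {f : α → ℕ}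
    (h : ∑ a, f a = 1) : ∃ a₀, ∀ a, f a = if a = a₀ then 1 else 0 := by
  obtain ⟨a₀, -, ha₀⟩ := exists_ne_zero_of_sum_ne_zero (h ▸ one_ne_zero)
  have hsplit := add_sum_erase univ f (mem_univ a₀)
  refine ⟨a₀, fun a => ?_⟩
  split_ifs with ha
  · subst ha
    omega
  · have := single_le_sum (fun _ _ => Nat.zero_le _) (mem_erase.mpr ⟨ha, mem_univ a⟩) (f := f)
    omega

theorem eq_one_and_eq_one_of_mul_add_mul {m n F G : ℕ} (hmn : ¬ m ∣ n) (hnm : ¬ n ∣ m)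
    (h : n * F + m * G = m + n) : F = 1 ∧ G = 1 := by
  have hF : F ≠ 0 := by
    rintro rfl
    exact hmn ((Nat.dvd_add_right (dvd_refl m)).mp ⟨G, by linarith⟩)
  have hG : G ≠ 0 := by
    rintro rfl
    exact hnm ((Nat.dvd_add_left (dvd_refl n)).mp ⟨F, by linarith⟩)
  have hnF : n * 1 ≤ n * F := Nat.mul_le_mul_left n (by omega)
  have hmG : m * 1 ≤ m * G := Nat.mul_le_mul_left m (by omega)
  have hn : n ≠ 0 := by rintro rfl; exact hmn (dvd_zero m)
  have hm : m ≠ 0 := by rintro rfl; exact hnm (dvd_zero n)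
  constructor <;> by_contra hne
  · have : n * 2 ≤ n * F := Nat.mul_le_mul_left n (by omega)
    omega
  · have : m * 2 ≤ m * G := Nat.mul_le_mul_left m (by omega)
    omega

theorem exists_eq_ite_add_ite {α β : Type*} [Fintype α] [Fintype β] [DecidableEq α]
    [DecidableEq β] (hαβ : ¬ Fintype.card α ∣ Fintype.card β)
    (hβα : ¬ Fintype.card β ∣ Fintype.card α) (f : α → ℕ) (g : β → ℕ)
    (h : ∑ x : α × β, (f x.1 + g x.2) = Fintype.card α + Fintype.card β) :
    ∃ a₀ b₀, ∀ a b, f a + g b = (if a = a₀ then 1 else 0) + (if b = b₀ then 1 else 0) := by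
  have htotal : Fintype.card β * ∑ a, f a + Fintype.card α * ∑ b, g b =
      Fintype.card α + Fintype.card β := by
    simpa only [Fintype.sum_prod_type, sum_add_distrib, sum_const, card_univ, smul_eq_mul,
      mul_sum] using h
  obtain ⟨hf, hg⟩ := eq_one_and_eq_one_of_mul_add_mul hαβ hβα htotal
  obtain ⟨a₀, ha₀⟩ := exists_eq_ite_of_sum_eq_one hf
  obtain ⟨b₀, hb₀⟩ := exists_eq_ite_of_sum_eq_one hg
  exact ⟨a₀, b₀, fun a b => by rw [ha₀, hb₀]⟩

theorem exists_eq_ite_add_ite_of_sum_nsmul_eq_zero {α β V : Type*} [Fintype α] [Fintype β]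
    [DecidableEq α] [DecidableEq β] [AddCommGroup V] [Module ℚ V]
    (hαβ : ¬ Fintype.card α ∣ Fintype.card β) (hβα : ¬ Fintype.card β ∣ Fintype.card α)
    (v : α × β → V) (hrow : ∀ a, ∑ b, v (a, b) = 0) (hcol : ∀ b, ∑ a, v (a, b) = 0)
    (hrank : (Fintype.card α - 1) * (Fintype.card β - 1) ≤ finrank ℚ (span ℚ (Set.range v)))
    (d : α × β → ℕ) (hsum : ∑ x, d x = Fintype.card α + Fintype.card β)
    (hd : ∑ x, d x • v x = 0) :
    ∃ a₀ b₀, ∀ a b, d (a, b) = (if a = a₀ then 1 else 0) + (if b = b₀ then 1 else 0) := by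
  have : Nonempty α :=
    Fintype.card_pos_iff.mp (Nat.pos_of_ne_zero fun h => hβα (h ▸ dvd_zero _))
  have : Nonempty β :=
    Fintype.card_pos_iff.mp (Nat.pos_of_ne_zero fun h => hαβ (h ▸ dvd_zero _))
  obtain ⟨f, g, hfg⟩ := exists_add_of_sum_smul_eq_zero v hrow hcol hrank (fun x => (d x : ℚ))
    (by simpa only [Nat.cast_smul_eq_nsmul] using hd)
  obtain ⟨f', g', hfg'⟩ := exists_add_of_add_eq_add d fun a a' b b' => by
    have : (d (a, b) + d (a', b') : ℚ) = d (a, b') + d (a', b) := by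
      rw [hfg, hfg, hfg, hfg]
      ring
    exact_mod_cast this
  obtain ⟨a₀, b₀, h⟩ := exists_eq_ite_add_ite hαβ hβα f' g' <| by
    rw [← hsum]
    exact sum_congr rfl fun x _ => (hfg' x.1 x.2).symm
  exact ⟨a₀, b₀, fun a b => (hfg' a b).trans (h a b)⟩

theorem finrank_span_range_pow_eq_totient {L : Type*} [Field L] [CharZero L] {ζ : L} {N : ℕ}
    (hζ : IsPrimitiveRoot ζ N) (hN : 0 < N) :
    finrank ℚ (span ℚ (Set.range (ζ ^ · : ℕ → L))) = N.totient := by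
  have hint : IsIntegral ℚ ζ := (hζ.isIntegral hN).tower_top
  have hspan : span ℚ (Set.range (ζ ^ · : ℕ → L)) =
      Subalgebra.toSubmodule (IntermediateField.adjoin ℚ {ζ}).toSubalgebra := by
    rw [IntermediateField.adjoin_simple_toSubalgebra_of_isAlgebraic hint.isAlgebraic,
      Algebra.adjoin_eq_span, Submonoid.closure_singleton_eq, MonoidHom.coe_mrange]
    rfl
  rw [hspan, Subalgebra.finrank_toSubmodule, IntermediateField.finrank_eq_finrank_subalgebra,
    IntermediateField.adjoin.finrank hint, ← Polynomial.cyclotomic_eq_minpoly_rat hζ hN,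
    Polynomial.natDegree_cyclotomic]

theorem AddChar.range_eq_range_pow {N : ℕ} [NeZero N] {M : Type*} [Monoid M]
    (ψ : AddChar (ZMod N) M) : Set.range ψ = Set.range (ψ 1 ^ · : ℕ → M) := by
  ext y
  constructor
  · rintro ⟨x, rfl⟩
    exact ⟨x.val, by dsimp only; rw [← map_nsmul_eq_pow, nsmul_one, ZMod.natCast_zmod_val]⟩
  · rintro ⟨n, rfl⟩
    exact ⟨n, by dsimp only; rw [← map_nsmul_eq_pow, nsmul_one]⟩

theorem AddChar.sum_apply_add_eq_zero {G B R : Type*} [AddGroup G] [AddGroup B] [Fintype B]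
    [Nontrivial B] [CommRing R] [IsDomain R] {ψ : AddChar G R} (hψ : Injective ψ) {f : B →+ G}
    (hf : Injective f) (g : G) : ∑ b, ψ (g + f b) = 0 := by
  have hne : ψ.compAddMonoidHom f ≠ 1 := by
    obtain ⟨b, hb⟩ := exists_ne (0 : B)
    refine ne_one_iff.mpr ⟨b, fun h => hb (hf (hψ ?_))⟩
    rw [map_zero, map_zero_eq_one]
    exact h
  simp_rw [map_add_eq_mul, ← mul_sum]
  exact mul_eq_zero_of_right _ (sum_eq_zero_of_ne_one hne)

theorem ZMod.stdAddChar_eq_exp_pow (N : ℕ) [NeZero N] (x : ZMod N) :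
    stdAddChar x = Complex.exp (2 * Real.pi * Complex.I / N) ^ x.val := by
  rw [stdAddChar_apply, toCircle_apply, ← Complex.exp_nat_mul]
  ring_nf

theorem ZMod.isPrimitiveRoot_stdAddChar_one (N : ℕ) [NeZero N] :
    IsPrimitiveRoot (stdAddChar (1 : ZMod N)) N := by
  have h := stdAddChar_coe (N := N) 1
  push_cast at h
  rw [h, mul_one]
  exact Complex.isPrimitiveRoot_exp N (NeZero.ne N)

theorem ZMod.finrank_span_range_stdAddChar (N : ℕ) [NeZero N] :
    finrank ℚ (span ℚ (Set.range (stdAddChar : ZMod N → ℂ))) = N.totient := by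
  rw [AddChar.range_eq_range_pow,
    finrank_span_range_pow_eq_totient (isPrimitiveRoot_stdAddChar_one N) (NeZero.pos N)]

theorem ZMod.mem_range_add_natCast_mul_iff {N n : ℕ} [NeZero N] (h : n ∣ N) (r x : ZMod N) :
    x ∈ Set.range (fun t => r + (n : ZMod N) * t) ↔
      castHom h (ZMod n) x = castHom h (ZMod n) r := by
  rw [← sub_eq_zero, ← map_sub]
  constructor
  · rintro ⟨t, rfl⟩
    rw [add_sub_cancel_left, map_mul, map_natCast, natCast_self, zero_mul]
  · intro hx
    rw [castHom_apply, cast_eq_val, natCast_eq_zero_iff] at hx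
    obtain ⟨k, hk⟩ := hx
    have hxr : x - r = n * k := by
      rw [← natCast_zmod_val (x - r), hk]
      push_cast
      rfl
    exact ⟨k, by linear_combination -hxr⟩

theorem exists_eq_ite_add_ite_of_sum_nsmul_stdAddChar_eq_zero {p q : ℕ} [Fact p.Prime]
    [Fact q.Prime] (h : p.Coprime q) (d : ZMod p × ZMod q → ℕ) (hsum : ∑ x, d x = p + q)
    (hd : ∑ x, d x • ZMod.stdAddChar ((ZMod.chineseRemainder h).symm x) = 0) :
    ∃ s₀ t₀, ∀ s t, d (s, t) = (if s = s₀ then 1 else 0) + (if t = t₀ then 1 else 0) := by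
  set e := (ZMod.chineseRemainder h).symm
  set ψ : AddChar (ZMod p × ZMod q) ℂ :=
    ZMod.stdAddChar.compAddMonoidHom (e : ZMod p × ZMod q →+ ZMod (p * q))
  have hψ : Injective ψ := ZMod.injective_stdAddChar.comp e.injective
  have hp := (Fact.out : p.Prime).one_lt
  have hq := (Fact.out : q.Prime).one_lt
  refine exists_eq_ite_add_ite_of_sum_nsmul_eq_zero ?_ ?_ ψ (fun s => ?_) (fun t => ?_) ?_ d
    (by simpa using hsum) hd
  · simpa using fun hpq => hp.ne' (Nat.Coprime.eq_one_of_dvd h hpq)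
  · simpa using fun hqp => hq.ne' (Nat.Coprime.eq_one_of_dvd h.symm hqp)
  · simpa using AddChar.sum_apply_add_eq_zero hψ (f := AddMonoidHom.inr _ _)
      (Prod.mk_right_injective 0) (s, 0)
  · simpa using AddChar.sum_apply_add_eq_zero hψ (f := AddMonoidHom.inl _ _)
      (Prod.mk_left_injective 0) (0, t)
  · have hrange : Set.range ψ = Set.range (ZMod.stdAddChar : ZMod (p * q) → ℂ) :=
      e.surjective.range_comp ZMod.stdAddChar
    rw [hrange, ZMod.finrank_span_range_stdAddChar, Nat.totient_mul h,
      Nat.totient_prime Fact.out, Nat.totient_prime Fact.out]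
    simp

theorem IsHadamard.sum_mul_conj_eq_zero {n : ℕ} [NeZero n] {H : Matrix (ZMod n) (ZMod n) ℂ}
    (hH : _root_.IsHadamard H) {i j : ZMod n} (hij : i ≠ j) :
    ∑ k, H i k * conj (H j k) = 0 := by
  simpa [Matrix.mul_apply, Matrix.one_apply_ne hij] using congrFun (congrFun hH.2 i) j

theorem sum_comp_eq_sum_card_fiber_nsmul {κ γ M : Type*} [Fintype κ] [Fintype γ] [DecidableEq γ]
    [AddCommMonoid M] (F : κ → γ) (f : γ → M) :
    ∑ k, f (F k) = ∑ x, #{k | F k = x} • f x := by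
  refine (sum_fiberwise univ F (f ∘ F)).symm.trans (sum_congr rfl fun x _ => ?_)
  rw [← sum_const]
  exact sum_congr rfl fun k hk => congrArg f (mem_filter.mp hk).2

theorem bijOn_filter_of_card_fiber_eq_one {κ γ : Type*} [Fintype κ] [DecidableEq γ] {L : κ → γ}
    {S : Finset γ} (h : ∀ x ∈ S, #{k | L k = x} = 1) :
    Set.BijOn L ({k | L k ∈ S} : Finset κ) S := by
  refine ⟨fun k hk => by simpa using hk, fun k hk k' _ hkk' => ?_, fun x hx => ?_⟩
  · have hx : L k ∈ S := by simpa using hk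
    exact card_le_one.mp (h _ hx).le k (by simp) k' (by simp [hkk'])
  · obtain ⟨k, hk⟩ := card_pos.mp ((h x hx).symm ▸ Nat.one_pos)
    rw [mem_filter] at hk
    exact ⟨k, by simpa [hk.2] using hx, hk.2⟩

theorem admissibleDecomp_of_card_fiber {p q : ℕ} [NeZero (p + q)]
    {L : ZMod (p + q) → ZMod (p * q)} {r : ZMod (p * q)} {A B : Finset (ZMod (p * q))}
    (hA : (A : Set (ZMod (p * q))) = Set.range (fun t => r + (q : ZMod (p * q)) * t))
    (hB : (B : Set (ZMod (p * q))) = Set.range (fun t => r + (p : ZMod (p * q)) * t))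
    (hAcard : #A = p) (hBcard : #B = q) (hAB : A ∩ B = {r})
    (hL : ∀ x, #{k | L k = x} = (if x ∈ A then 1 else 0) + (if x ∈ B then 1 else 0)) :
    AdmissibleDecomp p q L {k | L k ∈ A.erase r} {k | L k ∈ B.erase r} {k | L k = r} r := by
  have hmem (x) (hxA : x ∈ A) (hxB : x ∈ B) : x = r := by
    simpa [hAB] using mem_inter.mpr ⟨hxA, hxB⟩
  have hrA : r ∈ A := (mem_inter.mp (hAB ▸ mem_singleton_self r)).1
  have hrB : r ∈ B := (mem_inter.mp (hAB ▸ mem_singleton_self r)).2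
  have hP := bijOn_filter_of_card_fiber_eq_one (L := L) (S := A.erase r) fun x hx => by
    obtain ⟨hxr, hxA⟩ := mem_erase.mp hx
    have hxB : x ∉ B := fun hxB => hxr (hmem x hxA hxB)
    simp [hL, hxA, hxB]
  have hQ := bijOn_filter_of_card_fiber_eq_one (L := L) (S := B.erase r) fun x hx => by
    obtain ⟨hxr, hxB⟩ := mem_erase.mp hx
    have hxA : x ∉ A := fun hxA => hxr (hmem x hxA hxB)
    simp [hL, hxA, hxB]
  refine ⟨?_, ?_, ?_, ?_, ?_, ?_, ?_, ?_, ?_, ?_⟩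
  · exact disjoint_filter.mpr fun k _ hkA hkB =>
      (mem_erase.mp hkA).1 (hmem _ (mem_erase.mp hkA).2 (mem_erase.mp hkB).2)
  · exact disjoint_filter.mpr fun k _ hkA hkr => (mem_erase.mp hkA).1 hkr
  · exact disjoint_filter.mpr fun k _ hkB hkr => (mem_erase.mp hkB).1 hkr
  · refine eq_univ_of_forall fun k => ?_
    have hk : 0 < #{k' | L k' = L k} := card_pos.mpr ⟨k, by simp⟩
    rw [hL] at hk
    simp only [mem_union, mem_filter, mem_univ, true_and, mem_erase]
    split_ifs at hk <;> first | omega | tauto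
  · simpa [hrA, hrB] using hL r
  · simp
  · rw [hP.finsetCard_eq, card_erase_of_mem hrA, hAcard]
  · simpa [hA] using hP
  · rw [hQ.finsetCard_eq, card_erase_of_mem hrB, hBcard]
  · simpa [hB] using hQ

theorem exists_admissibleDecomp_of_card_fiber_eq_ite_add_ite {p q : ℕ} [NeZero p] [NeZero q]
    [NeZero (p + q)] (h : p.Coprime q) (L : ZMod (p + q) → ZMod (p * q)) (s₀ : ZMod p)
    (t₀ : ZMod q) (hL : ∀ s t, #{k | ZMod.chineseRemainder h (L k) = (s, t)} =
      (if s = s₀ then 1 else 0) + (if t = t₀ then 1 else 0)) :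
    ∃ P Q R, AdmissibleDecomp p q L P Q R ((ZMod.chineseRemainder h).symm (s₀, t₀)) := by
  set e := ZMod.chineseRemainder h
  have he₁ (x) : (e x).1 = ZMod.castHom (dvd_mul_right p q) (ZMod p) x :=
    RingHom.congr_fun (RingHom.ext_zmod ((RingHom.fst _ _).comp e.toRingHom) _) x
  have he₂ (x) : (e x).2 = ZMod.castHom (dvd_mul_left q p) (ZMod q) x :=
    RingHom.congr_fun (RingHom.ext_zmod ((RingHom.snd _ _).comp e.toRingHom) _) x
  set A := univ.image fun s => e.symm (s, t₀)
  set B := univ.image fun t => e.symm (s₀, t)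
  have hmemA (x) : x ∈ A ↔ (e x).2 = t₀ := by
    refine ⟨fun hx => ?_, fun hx => mem_image.mpr ⟨(e x).1, mem_univ _, ?_⟩⟩
    · obtain ⟨s, -, rfl⟩ := mem_image.mp hx
      simp
    · rw [← hx, Prod.mk.eta, RingEquiv.symm_apply_apply]
  have hmemB (x) : x ∈ B ↔ (e x).1 = s₀ := by
    refine ⟨fun hx => ?_, fun hx => mem_image.mpr ⟨(e x).2, mem_univ _, ?_⟩⟩
    · obtain ⟨t, -, rfl⟩ := mem_image.mp hx
      simp
    · rw [← hx, Prod.mk.eta, RingEquiv.symm_apply_apply]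
  refine ⟨_, _, _, admissibleDecomp_of_card_fiber (A := A) (B := B) ?_ ?_ ?_ ?_ ?_ fun x => ?_⟩
  · ext x
    rw [mem_coe, hmemA, ZMod.mem_range_add_natCast_mul_iff (dvd_mul_left q p), ← he₂, ← he₂,
      RingEquiv.apply_symm_apply]
  · ext x
    rw [mem_coe, hmemB, ZMod.mem_range_add_natCast_mul_iff (dvd_mul_right p q), ← he₁, ← he₁,
      RingEquiv.apply_symm_apply]
  · rw [card_image_of_injective _ fun s s' hs => (Prod.ext_iff.mp (e.symm.injective hs)).1,
      card_univ, ZMod.card]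
  · rw [card_image_of_injective _ fun t t' ht => (Prod.ext_iff.mp (e.symm.injective ht)).2,
      card_univ, ZMod.card]
  · ext x
    rw [mem_inter, hmemA, hmemB, mem_singleton, RingEquiv.eq_symm_apply, Prod.ext_iff, and_comm]
  · have hfib : #{k | L k = x} = #{k | e (L k) = e x} := by
      simp only [EmbeddingLike.apply_eq_iff_eq]
    rw [hfib, ← Prod.mk.eta (p := e x), hL]
    simp only [hmemA, hmemB]
    exact add_comm _ _

/-- For a Butson matrix `U = (ω^{M_{ij}})` of order `p+q` over `pq`-th roots of unity,
every pair of distinct rows admits an admissible decomposition. -/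
theorem rows_admissible_decomp
    (p q : ℕ) (hp : p.Prime) (hq : q.Prime) (hpq : p ≠ q) [NeZero (p + q)]
    (M : Matrix (ZMod (p + q)) (ZMod (p + q)) (ZMod (p * q)))
    (U : Matrix (ZMod (p + q)) (ZMod (p + q)) ℂ)
    (hU : ∀ i j, U i j = Complex.exp (2 * Real.pi * Complex.I / (p * q)) ^ (M i j).val)
    (hHad : _root_.IsHadamard U) :
    ∀ i j : ZMod (p + q), i ≠ j →
      ∃ (r : ZMod (p * q)) (P Q R : Finset (ZMod (p + q))),
        AdmissibleDecomp p q (fun k => M j k - M i k) P Q R r := by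
  intro i j hij
  have := Fact.mk hp
  have := Fact.mk hq
  have hcop : p.Coprime q := (Nat.coprime_primes hp hq).mpr hpq
  set e := ZMod.chineseRemainder hcop
  set L : ZMod (p + q) → ZMod (p * q) := fun k => M j k - M i k
  have hU' (i k) : U i k = ZMod.stdAddChar (M i k) := by
    rw [hU, ZMod.stdAddChar_eq_exp_pow]
    push_cast
    rfl
  have hvanish : ∑ k, ZMod.stdAddChar (L k) = 0 := by
    simpa [hU', L, sub_eq_add_neg, AddChar.map_add_eq_mul, AddChar.map_neg_eq_conj]
      using hHad.sum_mul_conj_eq_zero hij.symm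
  have hfibres : ∑ x, #{k | e (L k) = x} • ZMod.stdAddChar (e.symm x) = 0 := by
    have h := (sum_comp_eq_sum_card_fiber_nsmul (e ∘ L) (ZMod.stdAddChar ∘ e.symm)).symm
    simp only [Function.comp_apply, RingEquiv.symm_apply_apply] at h
    exact h.trans hvanish
  obtain ⟨s₀, t₀, hcross⟩ := exists_eq_ite_add_ite_of_sum_nsmul_stdAddChar_eq_zero hcop _
    ((card_eq_sum_card_fiberwise (f := e ∘ L) fun _ _ => mem_univ _).symm.trans (by simp))
    hfibres
  exact ⟨_, exists_admissibleDecomp_of_card_fiber_eq_ite_add_ite hcop L s₀ t₀ hcross⟩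
end
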